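/- arXiv:1704.03680 — 7 statements merged into one kernel-verified Lean document; each statement's English description precedes it below -/
import Mathlib

section
/- Let Φ : P → P be a linear shift, i.e. the K-algebra homomorphism determined by Φ(xᵢ) = aᵢxᵢ + bᵢ with aᵢ ∈ K ∖ {0} and bᵢ ∈ K for i = 1,…,n. Then for every monomial order σ and every nonzero polynomial f ∈ P, the polynomial Φ(f) is nonzero and LM_σ(Φ(f)) = LM_σ(f). -/
open MvPolynomial

/-- The leading monomial (σ-largest exponent vector in the support) of a polynomial. -/
noncomputable def leadMonomial {n : ℕ} {K : Type*} [Field K]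
    (m : MonomialOrder (Fin n)) (f : MvPolynomial (Fin n) K) : Fin n →₀ ℕ :=
  m.toSyn.symm (f.support.sup fun s => m.toSyn s)

/-!
The substitution `Xᵢ ↦ aᵢ Xᵢ + bᵢ` sends `c X^s` to `c ∏ (aᵢ Xᵢ + bᵢ)^sᵢ`, whose leading
monomial is `s` for every monomial order, because leading monomials add under multiplication
over a domain. An additive map with this property on monomials preserves the leading monomial of
every polynomial: the image of the leading term keeps its degree, while the images of the
remaining terms stay strictly below it. Working with `withBotDegree`, which is `⊥` exactly at
`0`, lets a single equation carry both nonvanishing and equality of leading monomials.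
-/

namespace MonomialOrder

open scoped MonomialOrder

variable {σ : Type*} (m : MonomialOrder σ)

theorem withBotDegree_sub_leadingTerm_lt {R : Type*} [CommRing R] {f : MvPolynomial σ R}
    (hf : f ≠ 0) : m.withBotDegree (f - m.leadingTerm f) ≺'[m] m.withBotDegree f := by
  rw [withBotDegree_lt_withBotDegree_iff]
  by_cases h : f - m.leadingTerm f = 0
  · exact Or.inr ⟨h, hf⟩
  refine Or.inl (m.degree_sub_leadingTerm_lt_degree fun h0 => h ?_)
  rw [m.eq_C_of_degree_eq_zero h0, leadingTerm_C, sub_self]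

theorem withBotDegree_map_le_of_monomial {R : Type*} [CommSemiring R]
    {ψ : MvPolynomial σ R →+ MvPolynomial σ R}
    (hψ : ∀ s c, m.withBotDegree (ψ (monomial s c)) ≼'[m] m.withBotDegree (monomial s c))
    (f : MvPolynomial σ R) : m.withBotDegree (ψ f) ≼'[m] m.withBotDegree f := by
  classical
  rw [f.as_sum, map_sum]
  refine m.withBotDegree_sum_le.trans (Finset.sup_le fun s hs => (hψ _ _).trans ?_)
  rw [← f.as_sum, withBotDegree_monomial, if_neg (mem_support_iff.mp hs)]
  exact m.le_withBotDegree hs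

theorem withBotDegree_map_eq_of_monomial {R : Type*} [CommRing R]
    {ψ : MvPolynomial σ R →+ MvPolynomial σ R}
    (hψ : ∀ s c, m.withBotDegree (ψ (monomial s c)) = m.withBotDegree (monomial s c))
    (f : MvPolynomial σ R) : m.withBotDegree (ψ f) = m.withBotDegree f := by
  rcases eq_or_ne f 0 with rfl | hf
  · rw [map_zero]
  have hlead : m.withBotDegree (ψ (m.leadingTerm f)) = m.withBotDegree f := by
    rw [leadingTerm, hψ, ← leadingTerm, withBotDegree_leadingTerm]
  have htail : m.withBotDegree (ψ (f - m.leadingTerm f)) ≺'[m] m.withBotDegree f :=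
    (m.withBotDegree_map_le_of_monomial (fun s c => by rw [hψ]) _).trans_lt
      (m.withBotDegree_sub_leadingTerm_lt hf)
  rw [← hlead] at htail
  calc m.withBotDegree (ψ f)
      = m.withBotDegree (ψ (m.leadingTerm f) + ψ (f - m.leadingTerm f)) := by
        rw [← map_add, add_sub_cancel]
    _ = m.withBotDegree f := by rw [withBotDegree_add_of_lt htail, hlead]

theorem degree_C_mul_X_add_C {R : Type*} [CommSemiring R] {a : R} (ha : a ≠ 0) (b : R)
    (i : σ) :
    m.degree (C a * X i + C b) = Finsupp.single i 1 := by
  classical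
  have hlin : m.degree (C a * X i) = Finsupp.single i 1 := by
    rw [C_mul_X_eq_monomial, degree_monomial, if_neg ha]
  have hconst : m.degree (C b) ≺[m] m.degree (C a * X i) := by
    rw [degree_C, hlin, map_zero, toSyn_lt_iff_ne_zero, ne_eq, toSyn_eq_zero_iff]
    exact Finsupp.single_ne_zero.mpr one_ne_zero
  rw [degree_add_of_lt hconst, hlin]

section Affine

variable {R : Type*} [CommRing R] [IsDomain R] {a : σ → R} (b : σ → R)

theorem withBotDegree_prod_pow_C_mul_X_add_C (ha : ∀ i, a i ≠ 0) (s : σ →₀ ℕ) :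
    m.withBotDegree (s.prod fun i k => (C (a i) * X i + C (b i)) ^ k) = s := by
  have hne : ∀ i, C (a i) * X i + C (b i) ≠ 0 := fun i =>
    m.ne_zero_of_degree_ne_zero (by simp [m.degree_C_mul_X_add_C (ha i)])
  have hpow : ∀ i ∈ s.support, (C (a i) * X i + C (b i)) ^ s i ≠ 0 :=
    fun i _ => pow_ne_zero _ (hne i)
  rw [Finsupp.prod, (withBotDegree_eq_coe_degree_iff _).mpr (Finset.prod_ne_zero_iff.mpr hpow),
    degree_prod hpow]
  simp only [degree_pow, m.degree_C_mul_X_add_C (ha _), Finsupp.smul_single_one]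
  exact congrArg _ s.sum_single

theorem withBotDegree_aeval_C_mul_X_add_C_monomial (ha : ∀ i, a i ≠ 0) (s : σ →₀ ℕ)
    (c : R) :
    m.withBotDegree (aeval (fun i => C (a i) * X i + C (b i)) (monomial s c)) =
      m.withBotDegree (monomial s c) := by
  classical
  rw [aeval_monomial, algebraMap_eq, withBotDegree_mul,
    withBotDegree_prod_pow_C_mul_X_add_C _ _ ha, withBotDegree_C, withBotDegree_monomial]
  split_ifs <;> simp

theorem withBotDegree_aeval_C_mul_X_add_C (ha : ∀ i, a i ≠ 0) (f : MvPolynomial σ R) :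
    m.withBotDegree (aeval (fun i => C (a i) * X i + C (b i)) f) = m.withBotDegree f :=
  m.withBotDegree_map_eq_of_monomial (ψ := (aeval _).toAddMonoidHom)
    (m.withBotDegree_aeval_C_mul_X_add_C_monomial b ha) f

end Affine

end MonomialOrder

/-- A linear shift of a polynomial ring sends `Xᵢ ↦ aᵢ Xᵢ + bᵢ` with `aᵢ ≠ 0`.
It preserves nonvanishing and leading monomials. -/
theorem linear_shift_preserves_leading_monomial
    {n : ℕ} {K : Type*} [Field K] (a b : Fin n → K) (ha : ∀ i, a i ≠ 0)
    (Φ : MvPolynomial (Fin n) K →ₐ[K] MvPolynomial (Fin n) K)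
    (hΦ : ∀ i, Φ (X i) = C (a i) * X i + C (b i))
    (m : MonomialOrder (Fin n)) (f : MvPolynomial (Fin n) K) (hf : f ≠ 0) :
    Φ f ≠ 0 ∧ leadMonomial m (Φ f) = leadMonomial m f := by
  have hΦ_aeval : Φ = aeval fun i => C (a i) * X i + C (b i) :=
    algHom_ext fun i => by rw [hΦ, aeval_X]
  have h := m.withBotDegree_aeval_C_mul_X_add_C b ha f
  rw [← hΦ_aeval, MonomialOrder.withBotDegree_eq_withBotDegree_iff] at h
  -- `leadMonomial m` unfolds to `m.degree`
  exact ⟨fun h0 => hf (h.2.mp h0), h.1⟩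
end

section
/- Let I ⊆ P be an ideal, σ a monomial order, and G a minimal monic σ-Gröbner basis of I such that every polynomial in G is factor-closed. Then G is the reduced σ-Gröbner basis of I; that is, for every g ∈ G, no exponent vector in the support of g other than LM_σ(g) is divisible (componentwise ≤) by LM_σ(g') for any g' ∈ G. -/
open MvPolynomial

/-- The leading term ideal of an ideal. -/
noncomputable def leadTermIdeal {n : ℕ} {K : Type*} [Field K]
    (m : MonomialOrder (Fin n)) (I : Ideal (MvPolynomial (Fin n) K)) :
    Ideal (MvPolynomial (Fin n) K) :=
  Ideal.span {g | ∃ f ∈ I, f ≠ 0 ∧ g = monomial (leadMonomial m f) (1 : K)}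

/-- `G` is a σ-Gröbner basis of `I`: a finite set of nonzero elements of `I` whose
leading monomials generate the leading term ideal of `I`. -/
def IsGroebnerBasis {n : ℕ} {K : Type*} [Field K]
    (m : MonomialOrder (Fin n)) (I : Ideal (MvPolynomial (Fin n) K))
    (G : Finset (MvPolynomial (Fin n) K)) : Prop :=
  (∀ g ∈ G, g ≠ 0 ∧ g ∈ I) ∧
    leadTermIdeal m I =
      Ideal.span ((fun g => monomial (leadMonomial m g) (1 : K)) '' (G : Set (MvPolynomial (Fin n) K)))

/-- `G` is a minimal monic σ-Gröbner basis of `I`. -/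
def IsMinimalMonicGB {n : ℕ} {K : Type*} [Field K]
    (m : MonomialOrder (Fin n)) (I : Ideal (MvPolynomial (Fin n) K))
    (G : Finset (MvPolynomial (Fin n) K)) : Prop :=
  IsGroebnerBasis m I G ∧
    (∀ g ∈ G, coeff (leadMonomial m g) g = 1) ∧
    (∀ g ∈ G, ∀ g' ∈ G, g ≠ g' → ¬ leadMonomial m g ≤ leadMonomial m g')

/-- A nonzero polynomial is factor-closed if some exponent vector of its support is
divisible (componentwise) by all exponent vectors of its support. -/
def FactorClosed {n : ℕ} {K : Type*} [Field K] (f : MvPolynomial (Fin n) K) : Prop :=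
  ∃ t ∈ f.support, ∀ s ∈ f.support, s ≤ t

/-- A minimal monic Gröbner basis all of whose elements are factor-closed is reduced. -/
theorem minimal_monic_factor_closed_is_reduced
    {n : ℕ} {K : Type*} [Field K]
    (m : MonomialOrder (Fin n)) (I : Ideal (MvPolynomial (Fin n) K))
    (G : Finset (MvPolynomial (Fin n) K))
    (hG : IsMinimalMonicGB m I G) (hfc : ∀ g ∈ G, FactorClosed g) :
    ∀ g ∈ G, ∀ s ∈ g.support, s ≠ leadMonomial m g →
      ∀ g' ∈ G, ¬ leadMonomial m g' ≤ s := by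
  intro g hg s hs hsne g' hg' hle
  obtain ⟨t, ht, htmax⟩ := hfc g hg
  -- t is the leading monomial of g
  have hLM : leadMonomial m g = t := by
    have hsup : g.support.sup (fun u => m.toSyn u) = m.toSyn t := by
      apply le_antisymm
      · exact Finset.sup_le fun u hu => m.toSyn_monotone (htmax u hu)
      · exact Finset.le_sup ht
    unfold leadMonomial
    rw [hsup]; exact m.toSyn.symm_apply_apply t
  have hsle : s ≤ leadMonomial m g := hLM ▸ htmax s hs
  by_cases hgg : g' = g
  · subst hgg
    exact hsne (le_antisymm hsle hle)
  · exact hG.2.2 g' hg' g hg hgg (le_trans hle hsle)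
end

section
/- Let I ⊆ P be an ideal, σ a monomial order, and G a minimal monic σ-Gröbner basis of I such that every polynomial in G is factor-closed. Then for every monomial order τ: LM_τ(g) = LM_σ(g) for each g ∈ G, the set G is a τ-Gröbner basis of I, and LT_τ(I) = LT_σ(I). In particular, I has GFan number 1. -/
open MvPolynomial

/-!
A factor-closed polynomial has the same leading monomial under every monomial order: the
monomial `t` of its support that every other one divides is the largest for any order. So the
leading monomials of `G` do not depend on the order, and it remains to see that `G` stays a
Gröbner basis under such an order `τ`. Dividing `f ∈ I` by `G` with respect to `τ` leaves a
remainder in `I` none of whose monomials is divisible by any `LM_τ(g) = LM_σ(g)`; as `G` is a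
σ-Gröbner basis, the remainder vanishes, and the quotients give a standard representation of `f`,
whence `LM_τ(g) ∣ LM_τ(f)` for some `g ∈ G`.
-/

namespace MonomialOrder

variable {σ : Type*} (m : MonomialOrder σ)

theorem degree_eq_of_forall_le {R : Type*} [CommSemiring R] {f : MvPolynomial σ R}
    {t : σ →₀ ℕ} (ht : t ∈ f.support) (hle : ∀ s ∈ f.support, s ≤ t) : m.degree f = t :=
  m.toSyn.injective <|
    le_antisymm (m.degree_le_iff.2 fun s hs => m.toSyn_monotone (hle s hs)) (m.le_degree ht)

variable {K : Type*} [Field K]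

theorem exists_degree_le_of_eq_linearCombination {ι : Type*} {b : ι → MvPolynomial σ K}
    {f : MvPolynomial σ K} (g : ι →₀ MvPolynomial σ K)
    (hfg : f = Finsupp.linearCombination _ b g)
    (hdeg : ∀ i, m.degree (b i * g i) ≼[m] m.degree f) (hf0 : f ≠ 0) :
    ∃ i, m.degree (b i) ≤ m.degree f := by
  classical
  have hsum : f = ∑ i ∈ g.support, b i * g i := by
    simp only [hfg, Finsupp.linearCombination_apply, Finsupp.sum, smul_eq_mul, mul_comm]
  have hmem : m.degree f ∈ (∑ i ∈ g.support, b i * g i).support := by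
    rw [← hsum]
    exact (m.degree_mem_support_iff f).2 hf0
  obtain ⟨i, -, hi⟩ := Finset.mem_biUnion.1 (support_sum hmem)
  obtain ⟨hb, hg⟩ := mul_ne_zero_iff.1 (show b i * g i ≠ 0 by rintro h; simp [h] at hi)
  have hdeg_eq : m.degree (b i * g i) = m.degree f :=
    m.toSyn.injective (le_antisymm (hdeg i) (m.le_degree hi))
  rw [m.degree_mul hb hg] at hdeg_eq
  exact ⟨i, hdeg_eq ▸ le_self_add⟩

theorem exists_degree_le_of_degree_eq (m' : MonomialOrder σ) {I : Ideal (MvPolynomial σ K)}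
    {B : Set (MvPolynomial σ K)} (hBI : B ⊆ I) (hB0 : ∀ b ∈ B, b ≠ 0)
    (hdeg : ∀ b ∈ B, m'.degree b = m.degree b)
    (hB : ∀ f ∈ I, f ≠ 0 → ∃ b ∈ B, m.degree b ≤ m.degree f)
    {f : MvPolynomial σ K} (hf : f ∈ I) (hf0 : f ≠ 0) :
    ∃ b ∈ B, m'.degree b ≤ m'.degree f := by
  obtain ⟨g, r, hfr, hdeg', hr⟩ := m'.div_set
    (fun b hb => isUnit_iff_ne_zero.2 (m'.leadingCoeff_ne_zero_iff.2 (hB0 b hb))) f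
  have hcomb : Finsupp.linearCombination _ (fun b : B => (b : MvPolynomial σ K)) g ∈ I :=
    Submodule.span_le.2 hBI ((Finsupp.mem_span_iff_linearCombination _ _ _).2 ⟨g, rfl⟩)
  have hr0 : r = 0 := by
    by_contra hr0
    have hrI : r ∈ I := (I.add_mem_iff_right hcomb).1 (hfr ▸ hf)
    obtain ⟨b, hb, hle⟩ := hB r hrI hr0
    exact hr _ ((m.degree_mem_support_iff r).2 hr0) b hb (hdeg b hb ▸ hle)
  obtain ⟨⟨b, hb⟩, hle⟩ :=
    m'.exists_degree_le_of_eq_linearCombination g (by rw [hfr, hr0, add_zero]) hdeg' hf0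
  exact ⟨b, hb, hle⟩

end MonomialOrder

section LeadMonomial

variable {n : ℕ} {K : Type*} [Field K]

theorem leadMonomial_eq_degree (m : MonomialOrder (Fin n)) (f : MvPolynomial (Fin n) K) :
    leadMonomial m f = m.degree f :=
  rfl

theorem FactorClosed.leadMonomial_eq {f : MvPolynomial (Fin n) K} (hf : FactorClosed f)
    (τ m : MonomialOrder (Fin n)) : leadMonomial τ f = leadMonomial m f := by
  obtain ⟨t, ht, hle⟩ := hf
  rw [leadMonomial_eq_degree, leadMonomial_eq_degree, τ.degree_eq_of_forall_le ht hle,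
    m.degree_eq_of_forall_le ht hle]

theorem monomial_one_mem_span_leadMonomial_iff {m : MonomialOrder (Fin n)}
    {G : Finset (MvPolynomial (Fin n) K)} {s : Fin n →₀ ℕ} :
    monomial s (1 : K) ∈ Ideal.span
        ((fun g => monomial (leadMonomial m g) (1 : K)) '' (G : Set (MvPolynomial (Fin n) K))) ↔
      ∃ g ∈ G, leadMonomial m g ≤ s := by
  classical
  rw [← Set.image_image (fun s => monomial s (1 : K)) (leadMonomial m),
    mem_ideal_span_monomial_image, support_monomial, if_neg one_ne_zero]
  simp

theorem isGroebnerBasis_iff {m : MonomialOrder (Fin n)} {I : Ideal (MvPolynomial (Fin n) K)}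
    {G : Finset (MvPolynomial (Fin n) K)} :
    IsGroebnerBasis m I G ↔ (∀ g ∈ G, g ≠ 0 ∧ g ∈ I) ∧
      ∀ f ∈ I, f ≠ 0 → ∃ g ∈ G, leadMonomial m g ≤ leadMonomial m f := by
  refine and_congr_right fun hG => ⟨fun h f hf hf0 => ?_, fun h => le_antisymm ?_ ?_⟩
  · rw [← monomial_one_mem_span_leadMonomial_iff, ← h]
    exact Ideal.subset_span ⟨f, hf, hf0, rfl⟩
  · rw [leadTermIdeal, Ideal.span_le]
    rintro _ ⟨f, hf, hf0, rfl⟩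
    exact monomial_one_mem_span_leadMonomial_iff.2 (h f hf hf0)
  · rw [Ideal.span_le]
    rintro _ ⟨g, hg, rfl⟩
    exact Ideal.subset_span ⟨g, (hG g hg).2, (hG g hg).1, rfl⟩

variable {m τ : MonomialOrder (Fin n)} {I : Ideal (MvPolynomial (Fin n) K)}
  {G : Finset (MvPolynomial (Fin n) K)}

theorem IsGroebnerBasis.of_leadMonomial_eq (hG : IsGroebnerBasis m I G)
    (hLM : ∀ g ∈ G, leadMonomial τ g = leadMonomial m g) : IsGroebnerBasis τ I G := by
  obtain ⟨hG0, hdiv⟩ := isGroebnerBasis_iff.1 hG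
  exact isGroebnerBasis_iff.2 ⟨hG0, fun f hf hf0 =>
    m.exists_degree_le_of_degree_eq τ (fun g hg => (hG0 g hg).2) (fun g hg => (hG0 g hg).1)
      hLM hdiv hf hf0⟩

theorem IsGroebnerBasis.leadTermIdeal_eq (hG : IsGroebnerBasis m I G)
    (hLM : ∀ g ∈ G, leadMonomial τ g = leadMonomial m g) :
    leadTermIdeal τ I = leadTermIdeal m I := by
  rw [(hG.of_leadMonomial_eq hLM).2, hG.2, Set.image_congr fun g hg => by rw [hLM g hg]]

end LeadMonomial

/-- If `G` is a minimal monic σ-Gröbner basis of `I` consisting of factor-closed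
polynomials, then for every monomial order τ the leading monomials are unchanged,
`G` is a τ-Gröbner basis of `I`, the leading term ideals agree, and `I` has
GFan number 1. -/
theorem minimal_monic_factor_closed_GFanNum_one
    {n : ℕ} {K : Type*} [Field K]
    (m : MonomialOrder (Fin n)) (I : Ideal (MvPolynomial (Fin n) K))
    (G : Finset (MvPolynomial (Fin n) K))
    (hG : IsMinimalMonicGB m I G) (hfc : ∀ g ∈ G, FactorClosed g) :
    (∀ τ : MonomialOrder (Fin n),
        (∀ g ∈ G, leadMonomial τ g = leadMonomial m g) ∧
        IsGroebnerBasis τ I G ∧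
        leadTermIdeal τ I = leadTermIdeal m I) ∧
      ∀ τ τ' : MonomialOrder (Fin n), leadTermIdeal τ I = leadTermIdeal τ' I := by
  refine ⟨fun τ => ?_, fun τ τ' => ?_⟩
  · have hLM : ∀ g ∈ G, leadMonomial τ g = leadMonomial m g :=
      fun g hg => (hfc g hg).leadMonomial_eq τ m
    exact ⟨hLM, hG.1.of_leadMonomial_eq hLM, hG.1.leadTermIdeal_eq hLM⟩
  · rw [hG.1.leadTermIdeal_eq fun g hg => (hfc g hg).leadMonomial_eq τ m,
      hG.1.leadTermIdeal_eq fun g hg => (hfc g hg).leadMonomial_eq τ' m]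
end

section
/- Let I ⊆ P be a monomial ideal with minimal monomial generating set {t₁,…,t_s} (the monomials tᵢ generate I and none divides another), let π = (π₁,…,πₙ) where each πᵢ is a sequence of pairwise distinct elements of K, and let D_π(I) = ⟨D_π(t₁),…,D_π(t_s)⟩ be the distraction of I. Then for every monomial order σ, the set {D_π(t₁),…,D_π(t_s)} is the reduced σ-Gröbner basis of D_π(I); in particular LT_σ(D_π(I)) = I for every monomial order σ, and D_π(I) has GFan number 1. -/
/-!
Every exponent in the support of the distraction `D(α)` is componentwise below `α`, and `X^α`
occurs with coefficient `1`; hence `α` is the leading monomial of `D(α)` for every monomial order.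
Since `Xᵢ D(α) = D(α + eᵢ) + c i (α i) D(α)`, the ideal generated by the `D(t)`, `t ∈ T`, is
spanned over `K` by the `D(γ)` with `γ` above some `t ∈ T`. These have pairwise distinct leading
monomials, so the leading monomial of any nonzero element of the ideal is such a `γ`, and the
leading term ideal is the monomial ideal generated by `T`. Reducedness follows from the
minimality of `T`, since every exponent of `D(t)` other than `t` lies strictly below `t`.
-/

open MvPolynomial

/-- `G` is a reduced σ-Gröbner basis of `I`. -/
def IsReducedGB {n : ℕ} {K : Type*} [Field K]
    (m : MonomialOrder (Fin n)) (I : Ideal (MvPolynomial (Fin n) K))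
    (G : Finset (MvPolynomial (Fin n) K)) : Prop :=
  IsMinimalMonicGB m I G ∧
    ∀ g ∈ G, ∀ s ∈ g.support, s ≠ leadMonomial m g →
      ∀ g' ∈ G, ¬ leadMonomial m g' ≤ s

/-- The distraction `∏ᵢ ∏_{j<αᵢ} (Xᵢ - c i j)` of the monomial with exponent vector `α`. -/
noncomputable def distraction {n : ℕ} {K : Type*} [Field K]
    (c : Fin n → ℕ → K) (α : Fin n →₀ ℕ) : MvPolynomial (Fin n) K :=
  ∏ i : Fin n, ∏ j ∈ Finset.range (α i), (X i - C (c i j))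

namespace MvPolynomial

section IsDivMonic

variable {σ R : Type*} [CommSemiring R]

def IsDivMonic (a : σ →₀ ℕ) (f : MvPolynomial σ R) : Prop :=
  coeff a f = 1 ∧ ∀ s ∈ f.support, s ≤ a

theorem isDivMonic_one : IsDivMonic (0 : σ →₀ ℕ) (1 : MvPolynomial σ R) := by
  classical
  refine ⟨coeff_zero_one, fun s hs => ?_⟩
  rw [mem_support_iff, coeff_one] at hs
  exact (by_contra fun h => hs (if_neg h)).ge

theorem IsDivMonic.mul {a b : σ →₀ ℕ} {f g : MvPolynomial σ R}
    (hf : IsDivMonic a f) (hg : IsDivMonic b g) : IsDivMonic (a + b) (f * g) := by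
  classical
  refine ⟨?_, fun s hs => ?_⟩
  · rw [coeff_mul, Finset.sum_eq_single (a, b), hf.1, hg.1, one_mul]
    · rintro ⟨x, y⟩ hxy hne
      by_contra hxy0
      have hx := hf.2 x (mem_support_iff.2 (left_ne_zero_of_mul hxy0))
      have hy := hg.2 y (mem_support_iff.2 (right_ne_zero_of_mul hxy0))
      obtain ⟨rfl, rfl⟩ :=
        (add_eq_add_iff_eq_and_eq hx hy).1 (Finset.HasAntidiagonal.mem_antidiagonal.1 hxy)
      exact hne rfl
    · exact fun h => (h (Finset.HasAntidiagonal.mem_antidiagonal.2 rfl)).elim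
  · obtain ⟨x, hx, y, hy, rfl⟩ := Finset.mem_add.1 (support_mul f g hs)
    exact add_le_add (hf.2 x hx) (hg.2 y hy)

theorem IsDivMonic.prod {ι : Type*} {s : Finset ι} {a : ι → σ →₀ ℕ}
    {f : ι → MvPolynomial σ R} (h : ∀ i ∈ s, IsDivMonic (a i) (f i)) :
    IsDivMonic (∑ i ∈ s, a i) (∏ i ∈ s, f i) := by
  induction s using Finset.cons_induction with
  | empty => exact isDivMonic_one
  | cons i s hi ih =>
    rw [Finset.sum_cons, Finset.prod_cons]
    exact (h i (Finset.mem_cons_self i s)).mul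
      (ih fun j hj => h j (Finset.mem_cons_of_mem hj))

theorem IsDivMonic.ne_zero [Nontrivial R] {a : σ →₀ ℕ} {f : MvPolynomial σ R}
    (h : IsDivMonic a f) : f ≠ 0 := by
  rintro rfl
  exact zero_ne_one ((coeff_zero a).symm.trans h.1)

theorem IsDivMonic.degree_eq [Nontrivial R] (m : MonomialOrder σ) {a : σ →₀ ℕ}
    {f : MvPolynomial σ R} (h : IsDivMonic a f) : m.degree f = a :=
  m.toSyn.injective <| le_antisymm
    (m.degree_le_iff.2 fun s hs => m.toSyn_monotone (h.2 s hs))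
    (m.le_degree (mem_support_iff.2 (h.1 ▸ one_ne_zero)))

theorem isDivMonic_X_sub_C {R : Type*} [CommRing R] (i : σ) (r : R) :
    IsDivMonic (Finsupp.single i 1) (X i - C r) := by
  classical
  refine ⟨by simp [coeff_X, coeff_C, eq_comm (a := (0 : σ →₀ ℕ))], fun s hs => ?_⟩
  rw [mem_support_iff, coeff_sub, coeff_X, coeff_C] at hs
  by_cases hsi : Finsupp.single i 1 = s
  · exact hsi.ge
  · have hs0 : 0 = s := by_contra fun h => hs (by simp [hsi, h])
    rw [← hs0]
    exact zero_le

end IsDivMonic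

end MvPolynomial

namespace MonomialOrder

variable {σ R : Type*} [CommRing R] [IsDomain R] (m : MonomialOrder σ)

theorem exists_degree_sum_smul_eq {G : Finset (MvPolynomial σ R)}
    (hG : Set.InjOn m.degree (G : Set (MvPolynomial σ R)))
    (a : MvPolynomial σ R → R) (h0 : ∑ g ∈ G, a g • g ≠ 0) :
    ∃ g ∈ G, m.degree (∑ g ∈ G, a g • g) = m.degree g := by
  classical
  revert hG h0
  refine Finset.induction_on_max_value (fun g => m.toSyn (m.degree g)) G (by simp) ?_
  intro g G hg hmax ih hG h0
  have hlt : ∀ x ∈ G, m.degree x ≺[m] m.degree g := fun x hx =>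
    (hmax x hx).lt_of_ne fun h => ne_of_mem_of_not_mem hx hg <|
      hG (Finset.mem_insert_of_mem hx) (Finset.mem_insert_self g G) (m.toSyn.injective h)
  -- the summand of largest degree cannot be cancelled by the others
  rw [Finset.sum_insert hg] at h0 ⊢
  by_cases hag : a g • g = 0
  · rw [hag, zero_add] at h0 ⊢
    obtain ⟨x, hx, hdeg⟩ := ih (hG.mono (by simp)) h0
    exact ⟨x, Finset.mem_insert_of_mem hx, hdeg⟩
  have hdeg : m.degree (a g • g) = m.degree g :=
    m.degree_smul_of_isRegular (IsRegular.of_ne_zero fun h => hag (by rw [h, zero_smul]))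
  refine ⟨g, Finset.mem_insert_self g G, ?_⟩
  by_cases hrest : ∑ x ∈ G, a x • x = 0
  · rw [hrest, add_zero, hdeg]
  obtain ⟨x, hx, hxdeg⟩ := ih (hG.mono (by simp)) hrest
  rw [m.degree_add_of_lt (by rw [hdeg, hxdeg]; exact hlt x hx), hdeg]

theorem degree_mem_image_of_mem_span {G : Set (MvPolynomial σ R)} (hG : Set.InjOn m.degree G)
    {f : MvPolynomial σ R} (hf : f ∈ Submodule.span R G) (hf0 : f ≠ 0) :
    m.degree f ∈ m.degree '' G := by
  obtain ⟨a, t, htG, -, rfl⟩ := Submodule.mem_span_iff_exists_finset_subset.1 hf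
  obtain ⟨g, hg, hdeg⟩ := m.exists_degree_sum_smul_eq (hG.mono htG) a hf0
  exact ⟨g, htG hg, hdeg.symm⟩

end MonomialOrder

section Distraction

variable {n : ℕ} {K : Type*} [Field K] (c : Fin n → ℕ → K)

theorem isDivMonic_distraction (α : Fin n →₀ ℕ) : IsDivMonic α (distraction c α) := by
  have h := IsDivMonic.prod (s := Finset.univ) fun i _ =>
    IsDivMonic.prod (s := Finset.range (α i)) fun j _ => isDivMonic_X_sub_C i (c i j)
  simpa [distraction, Finsupp.univ_sum_single] using h

theorem degree_distraction (m : MonomialOrder (Fin n)) (α : Fin n →₀ ℕ) :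
    m.degree (distraction c α) = α :=
  (isDivMonic_distraction c α).degree_eq m

theorem distraction_add_single (α : Fin n →₀ ℕ) (i : Fin n) :
    distraction c (α + Finsupp.single i 1) = distraction c α * (X i - C (c i (α i))) := by
  classical
  have hfactor : ∀ k,
      ∏ j ∈ Finset.range ((α + Finsupp.single i 1 : Fin n →₀ ℕ) k), (X k - C (c k j)) =
        (∏ j ∈ Finset.range (α k), (X k - C (c k j))) *
        if k = i then X i - C (c i (α i)) else 1 := by
    intro k
    rcases eq_or_ne k i with rfl | hk
    · simp [Finset.prod_range_succ]
    · simp [hk]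
  simp only [distraction, hfactor, Finset.prod_mul_distrib, Finset.prod_ite_eq',
    Finset.mem_univ, if_true]

theorem mul_distraction_mem_span (p : MvPolynomial (Fin n) K) (α : Fin n →₀ ℕ) :
    p * distraction c α ∈ Submodule.span K (distraction c '' Set.Ici α) := by
  induction p using MvPolynomial.induction_on generalizing α with
  | C a =>
    rw [← smul_eq_C_mul]
    exact Submodule.smul_mem _ a (Submodule.subset_span ⟨α, Set.self_mem_Ici, rfl⟩)
  | add p q hp hq =>
    rw [add_mul]
    exact add_mem (hp α) (hq α)
  | mul_X p i hp =>
    have hX : p * X i * distraction c α =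
        p * distraction c (α + Finsupp.single i 1) + c i (α i) • (p * distraction c α) := by
      rw [distraction_add_single, smul_eq_C_mul]
      ring
    rw [hX]
    refine add_mem ?_ (Submodule.smul_mem _ _ (hp α))
    exact Submodule.span_mono (Set.image_mono (Set.Ici_subset_Ici.2 le_self_add))
      (hp (α + Finsupp.single i 1))

theorem restrictScalars_span_distraction_le (S : Set (Fin n →₀ ℕ)) :
    (Ideal.span (distraction c '' S)).restrictScalars K ≤
      Submodule.span K (distraction c '' upperClosure S) := by
  intro f hf
  obtain ⟨r, t, htS, -, rfl⟩ := Submodule.mem_span_iff_exists_finset_subset.1 hf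
  refine Submodule.sum_mem _ fun g hg => ?_
  obtain ⟨s, hs, rfl⟩ := htS hg
  exact Submodule.span_mono (Set.image_mono fun γ hγ => mem_upperClosure.2 ⟨s, hs, hγ⟩)
    (mul_distraction_mem_span c (r _) s)

theorem degree_mem_upperClosure_of_mem_span_distraction (m : MonomialOrder (Fin n))
    {S : Set (Fin n →₀ ℕ)} {f : MvPolynomial (Fin n) K} (hf : f ∈ Ideal.span (distraction c '' S))
    (hf0 : f ≠ 0) :
    m.degree f ∈ upperClosure S := by
  have hinj : Set.InjOn m.degree (distraction c '' upperClosure S) := by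
    rintro _ ⟨α, -, rfl⟩ _ ⟨β, -, rfl⟩ h
    rw [degree_distraction, degree_distraction] at h
    rw [h]
  obtain ⟨_, ⟨γ, hγ, rfl⟩, hdeg⟩ := m.degree_mem_image_of_mem_span hinj
    (restrictScalars_span_distraction_le c S hf) hf0
  rwa [← hdeg, degree_distraction]

end Distraction

section GroebnerBasis

variable {n : ℕ} {K : Type*} [Field K] (c : Fin n → ℕ → K) (m : MonomialOrder (Fin n))

-- `leadMonomial m` is definitionally `m.degree`.
theorem leadMonomial_distraction (α : Fin n →₀ ℕ) : leadMonomial m (distraction c α) = α :=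
  degree_distraction c m α

theorem leadTermIdeal_span_distraction (S : Set (Fin n →₀ ℕ)) :
    leadTermIdeal m (Ideal.span (distraction c '' S)) =
      Ideal.span ((fun t => monomial t (1 : K)) '' S) := by
  apply le_antisymm
  · rw [leadTermIdeal, Ideal.span_le]
    rintro _ ⟨f, hf, hf0, rfl⟩
    obtain ⟨t, ht, hle⟩ :=
      mem_upperClosure.1 (degree_mem_upperClosure_of_mem_span_distraction c m hf hf0)
    exact Ideal.mem_of_dvd _ (monomial_one_dvd_monomial_one.2 hle)
      (Ideal.subset_span ⟨t, ht, rfl⟩)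
  · rw [Ideal.span_le]
    rintro _ ⟨t, ht, rfl⟩
    exact Ideal.subset_span ⟨distraction c t, Ideal.subset_span ⟨t, ht, rfl⟩,
      (isDivMonic_distraction c t).ne_zero, by rw [leadMonomial_distraction]⟩

theorem isReducedGB_image_distraction [DecidableEq (MvPolynomial (Fin n) K)]
    {T : Finset (Fin n →₀ ℕ)} (hmin : ∀ t ∈ T, ∀ t' ∈ T, t ≠ t' → ¬ t ≤ t') :
    IsReducedGB m (Ideal.span (distraction c '' T)) (T.image (distraction c)) := by
  simp only [IsReducedGB, IsMinimalMonicGB, IsGroebnerBasis, Finset.forall_mem_image,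
    leadMonomial_distraction]
  refine ⟨⟨⟨fun t ht => ⟨(isDivMonic_distraction c t).ne_zero, Ideal.subset_span ⟨t, ht, rfl⟩⟩,
    ?_⟩, fun t _ => (isDivMonic_distraction c t).1,
    fun t ht t' ht' hne => hmin t ht t' ht' (mt (congrArg _) hne)⟩, ?_⟩
  · rw [leadTermIdeal_span_distraction, Finset.coe_image, Set.image_image]
    simp only [leadMonomial_distraction]
  · intro t ht s hs hst t' ht' ht's
    have hsle : s ≤ t := (isDivMonic_distraction c t).2 s hs
    rcases eq_or_ne t' t with rfl | hne
    · exact hst (le_antisymm hsle ht's)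
    · exact hmin t' ht' t ht hne (ht's.trans hsle)

end GroebnerBasis

open scoped Classical in
theorem distraction_reduced_groebner_basis_general
    {n : ℕ} {K : Type*} [Field K]
    (T : Finset (Fin n →₀ ℕ))
    (I : Ideal (MvPolynomial (Fin n) K))
    (hgen : I = Ideal.span ((fun t => monomial t (1 : K)) '' (T : Set (Fin n →₀ ℕ))))
    (hmin : ∀ t ∈ T, ∀ t' ∈ T, t ≠ t' → ¬ t ≤ t')
    (c : Fin n → ℕ → K) :
    ∀ m : MonomialOrder (Fin n),
      IsReducedGB m (Ideal.span ((distraction c) '' (T : Set (Fin n →₀ ℕ))))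
        (T.image (distraction c)) ∧
      leadTermIdeal m (Ideal.span ((distraction c) '' (T : Set (Fin n →₀ ℕ)))) = I := fun m =>
  ⟨isReducedGB_image_distraction c m hmin, by rw [leadTermIdeal_span_distraction, hgen]⟩

open scoped Classical in
theorem distraction_reduced_groebner_basis
    {n : ℕ} {K : Type*} [Field K]
    (T : Finset (Fin n →₀ ℕ))
    (I : Ideal (MvPolynomial (Fin n) K))
    (hgen : I = Ideal.span ((fun t => monomial t (1 : K)) '' (T : Set (Fin n →₀ ℕ))))
    (hmin : ∀ t ∈ T, ∀ t' ∈ T, t ≠ t' → ¬ t ≤ t')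
    (c : Fin n → ℕ → K) (hc : ∀ i, Function.Injective (c i)) :
    ∀ m : MonomialOrder (Fin n),
      IsReducedGB m (Ideal.span ((distraction c) '' (T : Set (Fin n →₀ ℕ))))
        (T.image (distraction c)) ∧
      leadTermIdeal m (Ideal.span ((distraction c) '' (T : Set (Fin n →₀ ℕ)))) = I :=
  distraction_reduced_groebner_basis_general T I hgen hmin c
end

section
/- Let I ⊆ P be a zero-dimensional monomial ideal with minimal monomial generating set {t₁,…,t_s}, let dᵢ be the maximal exponent of xᵢ occurring among t₁,…,t_s, and let d = max{d₁,…,dₙ}. Assume that the images of 0, 1, …, d−1 under the natural map ℕ → K are pairwise distinct. Let D_nat(I) = ⟨D(t₁),…,D(t_s)⟩ where D(x₁^{α₁}···xₙ^{αₙ}) = ∏_{i=1}^n ∏_{j=0}^{αᵢ−1} (xᵢ − j) is the natural distraction, and let Stair(I) = {(a₁,…,aₙ) ∈ Kⁿ : x₁^{a₁}···xₙ^{aₙ} ∉ I, with aᵢ ∈ ℕ mapped into K} be the staircase of I. Then the vanishing ideal of Stair(I) equals D_nat(I): I(Stair(I)) = D_nat(I). -/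
open MvPolynomial

section Aux

variable {n : ℕ} {K : Type*} [Field K]

lemma eval_distraction (c : Fin n → ℕ → K) (α : Fin n →₀ ℕ) (p : Fin n → K) :
    eval p (distraction c α) = ∏ i : Fin n, ∏ j ∈ Finset.range (α i), (p i - c i j) := by
  simp [distraction]

lemma distraction_mul_of_le (c : Fin n → ℕ → K) {t α : Fin n →₀ ℕ} (h : t ≤ α) :
    distraction c α = distraction c t *
      ∏ i : Fin n, ∏ j ∈ Finset.Ico (t i) (α i), (X i - C (c i j)) := by
  rw [distraction, distraction, ← Finset.prod_mul_distrib]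
  exact Finset.prod_congr rfl fun i _ =>
    (Finset.prod_range_mul_prod_Ico _ (Finsupp.le_def.mp h i)).symm

lemma totalDegree_distraction_le (c : Fin n → ℕ → K) (α : Fin n →₀ ℕ) :
    (distraction c α).totalDegree ≤ ∑ i, α i := by
  refine (totalDegree_finset_prod _ _).trans ?_
  refine Finset.sum_le_sum fun i _ => ?_
  refine (totalDegree_finset_prod _ _).trans ?_
  calc ∑ j ∈ Finset.range (α i), (X i - C (c i j)).totalDegree
      ≤ ∑ j ∈ Finset.range (α i), 1 := by
        refine Finset.sum_le_sum fun j _ => ?_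
        refine (totalDegree_sub _ _).trans ?_
        simp [totalDegree_X]
    _ = α i := by simp

lemma distraction_eq_monomial_add (c : Fin n → ℕ → K) (α : Fin n →₀ ℕ) :
    ∃ q : MvPolynomial (Fin n) K, distraction c α = monomial α 1 + q ∧
      (q = 0 ∨ q.totalDegree < ∑ i, α i) := by
  suffices H : ∀ (N : ℕ) (α : Fin n →₀ ℕ), (∑ i, α i) ≤ N →
      ∃ q : MvPolynomial (Fin n) K, distraction c α = monomial α 1 + q ∧
        (q = 0 ∨ q.totalDegree < ∑ i, α i) from H _ α le_rfl
  intro N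
  induction N with
  | zero =>
    intro α hα
    have h0 : α = 0 := by
      ext i
      have := Finset.sum_eq_zero_iff.mp (Nat.le_zero.mp hα) i (Finset.mem_univ i)
      simpa using this
    subst h0
    refine ⟨0, ?_, Or.inl rfl⟩
    simp [distraction]
  | succ N ih =>
    intro α hα
    by_cases h0 : α = 0
    · subst h0; exact ⟨0, by simp [distraction], Or.inl rfl⟩
    · obtain ⟨i, hi⟩ : ∃ i, α i ≠ 0 := by
        by_contra h
        push_neg at h
        exact h0 (Finsupp.ext fun i => h i)
      set α' : Fin n →₀ ℕ := α - Finsupp.single i 1 with hα'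
      have hαeq : α = α' + Finsupp.single i 1 := by
        ext k
        rcases eq_or_ne k i with rfl | hk
        · simp only [hα', Finsupp.add_apply, Finsupp.tsub_apply, Finsupp.single_eq_same]
          omega
        · simp [hα', Finsupp.single_apply, Ne.symm hk, hk]
      have hsum : ∑ k, α k = (∑ k, α' k) + 1 := by
        conv_lhs => rw [hαeq]
        simp only [Finsupp.add_apply]
        rw [Finset.sum_add_distrib]
        congr 1
        simp [Finsupp.single_apply]
      have hα'i : α' i = α i - 1 := by simp [hα']
      have hfac : distraction c α = distraction c α' * (X i - C (c i (α' i))) := by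
        rw [distraction, distraction]
        have : ∀ k : Fin n, (∏ j ∈ Finset.range (α k), (X k - C (c k j))) =
            (∏ j ∈ Finset.range (α' k), (X k - C (c k j))) *
              (if k = i then (X i - C (c i (α' i))) else 1) := by
          intro k
          by_cases hk : k = i
          · subst hk
            have hstep : α k = α' k + 1 := by rw [hα'i]; omega
            rw [if_pos rfl, hstep, Finset.prod_range_succ]
          · have : α' k = α k := by
              simp [hα', Finsupp.single_apply, Ne.symm hk]
            rw [if_neg hk, this, mul_one]
        rw [Finset.prod_congr rfl (fun k _ => this k), Finset.prod_mul_distrib,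
          Finset.prod_ite_eq' Finset.univ i (fun _ => X i - C (c i (α' i)))]
        simp
      have hsum' : ∑ k, α' k ≤ N := by omega
      obtain ⟨q', hq', hq'deg⟩ := ih α' hsum'
      refine ⟨q' * (X i - C (c i (α' i))) - C (c i (α' i)) * monomial α' 1, ?_, ?_⟩
      · rw [hfac, hq']
        have hmono : (monomial α' (1 : K)) * X i = monomial α 1 := by
          rw [hαeq, X, monomial_mul, mul_one]
        ring_nf
        rw [← hmono]
        ring
      · right
        have hb : (C (c i (α' i)) * monomial α' (1:K)).totalDegree < ∑ k, α k := by
          refine lt_of_le_of_lt (totalDegree_mul _ _) ?_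
          rw [totalDegree_C, zero_add]
          have h2 : ((monomial α' (1:K)).totalDegree) ≤ ∑ k, α' k := by
            refine (totalDegree_monomial_le _ _).trans ?_
            rw [Finsupp.sum_fintype _ _ (fun _ => rfl)]
            simp
          omega
        rcases hq'deg with h | h
        · subst h
          simpa using lt_of_le_of_lt (totalDegree_sub (0 : MvPolynomial (Fin n) K) _)
            (by simpa using hb)
        · refine lt_of_le_of_lt (totalDegree_sub _ _) (max_lt ?_ hb)
          refine lt_of_le_of_lt (totalDegree_mul _ _) ?_
          have : (X i - C (c i (α' i))).totalDegree ≤ 1 := by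
            refine (totalDegree_sub _ _).trans ?_
            simp [totalDegree_X]
          omega

lemma mem_span_distraction (c : Fin n → ℕ → K) (f : MvPolynomial (Fin n) K) :
    f ∈ Submodule.span K (Set.range (distraction c)) := by
  suffices H : ∀ (N : ℕ) (f : MvPolynomial (Fin n) K), f.totalDegree < N →
      f ∈ Submodule.span K (Set.range (distraction c)) from
    H (f.totalDegree + 1) f (Nat.lt_succ_self _)
  intro N
  induction N with
  | zero => intro f hf; omega
  | succ N ih =>
    intro f hf
    rw [← support_sum_monomial_coeff f]
    refine Submodule.sum_mem _ fun α hα => ?_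
    obtain ⟨q, hq, hqdeg⟩ := distraction_eq_monomial_add c α
    have : monomial α (f.coeff α) = f.coeff α • distraction c α - f.coeff α • q := by
      rw [hq, smul_add]
      rw [smul_monomial, smul_eq_mul, mul_one]
      ring
    rw [this]
    refine Submodule.sub_mem _
      (Submodule.smul_mem _ _ (Submodule.subset_span ⟨α, rfl⟩)) ?_
    rcases hqdeg with h | h
    · subst h; simp
    · have hdeg : (f.coeff α • q).totalDegree < N := by
        have h1 : (∑ i, α i) ≤ f.totalDegree := by
          have := le_totalDegree hα
          rwa [Finsupp.sum_fintype _ _ (fun _ => rfl)] at this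
        exact lt_of_le_of_lt (totalDegree_smul_le _ _) (by omega)
      exact ih _ hdeg

end Aux

/-- The vanishing ideal of a set of points of `Kⁿ`. -/
noncomputable def vanishingIdealOfPoints {n : ℕ} {K : Type*} [Field K]
    (S : Set (Fin n → K)) : Ideal (MvPolynomial (Fin n) K) :=
  ⨅ p ∈ S, RingHom.ker (eval p)

/-- For a zero-dimensional monomial ideal `I`, the vanishing ideal of the staircase of
`I` equals the natural distraction of `I`. -/
theorem vanishingIdeal_staircase_eq_natural_distraction
    {n : ℕ} {K : Type*} [Field K]
    (T : Finset (Fin n →₀ ℕ))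
    (I : Ideal (MvPolynomial (Fin n) K))
    (hgen : I = Ideal.span ((fun t => monomial t (1 : K)) '' (T : Set (Fin n →₀ ℕ))))
    (hmin : ∀ t ∈ T, ∀ t' ∈ T, t ≠ t' → ¬ t ≤ t')
    (hzero : ∀ i : Fin n, ∃ e : ℕ, 1 ≤ e ∧ monomial (Finsupp.single i e) (1 : K) ∈ I)
    -- `d` is the maximum of the maximal exponents of the variables among the
    -- minimal generators of `I`
    (d : ℕ) (hd : d = Finset.univ.sup fun i : Fin n => T.sup fun t => t i)
    -- the images of `0, 1, …, d-1` in `K` are pairwise distinct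
    (hK : ∀ j k : ℕ, j < d → k < d → (j : K) = (k : K) → j = k) :
    vanishingIdealOfPoints
        {p : Fin n → K | ∃ a : Fin n →₀ ℕ,
          monomial a (1 : K) ∉ I ∧ p = fun i => ((a i : ℕ) : K)}
      = Ideal.span ((distraction (fun _ j => (j : K))) '' (T : Set (Fin n →₀ ℕ))) := by
  classical
  set c : Fin n → ℕ → K := fun _ j => (j : K) with hc
  set S : Set (Fin n → K) := {p : Fin n → K | ∃ a : Fin n →₀ ℕ,
          monomial a (1 : K) ∉ I ∧ p = fun i => ((a i : ℕ) : K)} with hS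
  -- membership in the monomial ideal
  have hmemI : ∀ a : Fin n →₀ ℕ, monomial a (1:K) ∈ I ↔ ∃ t ∈ T, t ≤ a := by
    intro a
    rw [hgen, mem_ideal_span_monomial_image]
    simp [support_monomial]
  -- membership in the vanishing ideal
  have hmemV : ∀ f : MvPolynomial (Fin n) K, f ∈ vanishingIdealOfPoints S ↔
      ∀ a : Fin n →₀ ℕ, monomial a (1:K) ∉ I →
        eval (fun i => ((a i : ℕ) : K)) f = 0 := by
    intro f
    simp only [vanishingIdealOfPoints, Submodule.mem_iInf, RingHom.mem_ker]
    constructor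
    · intro h a ha
      exact h _ ⟨a, ha, rfl⟩
    · rintro h p ⟨a, ha, rfl⟩
      exact h a ha
  -- the span of the distractions is contained in the vanishing ideal
  have hsub : Ideal.span (distraction c '' (T : Set (Fin n →₀ ℕ))) ≤
      vanishingIdealOfPoints S := by
    rw [Ideal.span_le]
    rintro _ ⟨t, ht, rfl⟩
    rw [SetLike.mem_coe, hmemV]
    intro a ha
    have hnt : ¬ t ≤ a := fun hle => ha ((hmemI a).2 ⟨t, ht, hle⟩)
    rw [Finsupp.le_def] at hnt
    push_neg at hnt
    obtain ⟨i, hi⟩ := hnt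
    rw [eval_distraction]
    refine Finset.prod_eq_zero (Finset.mem_univ i) ?_
    exact Finset.prod_eq_zero (Finset.mem_range.mpr hi) (by simp [hc])
  -- coordinates of staircase points are `< d`
  have hcoord : ∀ a : Fin n →₀ ℕ, monomial a (1:K) ∉ I → ∀ i : Fin n, a i < d := by
    intro a ha i
    obtain ⟨e, _, hei⟩ := hzero i
    obtain ⟨t, htT, hte⟩ := (hmemI _).1 hei
    have hnta : ¬ t ≤ a := fun h => ha ((hmemI a).2 ⟨t, htT, h⟩)
    rw [Finsupp.le_def] at hnta
    push_neg at hnta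
    obtain ⟨k, hk⟩ := hnta
    have htk : ∀ k' : Fin n, k' ≠ i → t k' = 0 := by
      intro k' h
      have := Finsupp.le_def.mp hte k'
      simpa [Finsupp.single_apply, Ne.symm h] using this
    have hki : k = i := by
      by_contra h
      rw [htk k h] at hk
      omega
    subst hki
    have ht1 : t k ≤ T.sup fun t => t k := Finset.le_sup (f := fun t : Fin n →₀ ℕ => t k) htT
    have ht2 : (T.sup fun t => t k) ≤ d := by
      rw [hd]
      exact Finset.le_sup (f := fun i : Fin n => T.sup fun t => t i) (Finset.mem_univ k)
    omega
  -- the diagonal evaluations are nonzero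
  have hdiag : ∀ a : Fin n →₀ ℕ, monomial a (1:K) ∉ I →
      eval (fun i => ((a i : ℕ) : K)) (distraction c a) ≠ 0 := by
    intro a ha
    rw [eval_distraction, Finset.prod_ne_zero_iff]
    intro i _
    rw [Finset.prod_ne_zero_iff]
    intro j hj
    rw [Finset.mem_range] at hj
    intro h0
    have h1 : ((a i : ℕ) : K) = (j : K) := by
      have := sub_eq_zero.mp h0
      simpa [hc] using this
    have := hK (a i) j (hcoord a ha i) (lt_trans hj (hcoord a ha i)) h1
    omega
  refine le_antisymm ?_ hsub
  intro f hf
  obtain ⟨l, hl⟩ := (Finsupp.mem_span_range_iff_exists_finsupp).mp (mem_span_distraction c f)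
  set F : (Fin n →₀ ℕ) → K → MvPolynomial (Fin n) K := fun α b => b • distraction c α with hF
  set l₁ := l.filter (fun α => monomial α (1:K) ∈ I) with hl₁
  set l₂ := l.filter (fun α => monomial α (1:K) ∉ I) with hl₂
  have hsplit : l₁ + l₂ = l := Finsupp.filter_pos_add_filter_neg l _
  have hf12 : f = l₁.sum F + l₂.sum F := by
    rw [← hl, ← hsplit]
    exact Finsupp.sum_add_index' (fun α => zero_smul K _) (fun α b₁ b₂ => add_smul b₁ b₂ _)
  have h1 : l₁.sum F ∈ Ideal.span (distraction c '' (T : Set (Fin n →₀ ℕ))) := by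
    refine Submodule.sum_mem _ fun α hα => ?_
    have hαI : monomial α (1:K) ∈ I := by
      rw [hl₁, Finsupp.support_filter, Finset.mem_filter] at hα
      exact hα.2
    obtain ⟨t, htT, htα⟩ := (hmemI α).1 hαI
    show (l₁ α) • distraction c α ∈ Ideal.span (distraction c '' (T : Set (Fin n →₀ ℕ)))
    rw [smul_eq_C_mul, distraction_mul_of_le c htα]
    exact Ideal.mul_mem_left _ _ (Ideal.mul_mem_right _ _
      (Ideal.subset_span ⟨t, htT, rfl⟩))
  have h2 : l₂ = 0 := by
    by_contra h2
    obtain ⟨α, hαmem, hαmin⟩ := Finset.exists_min_image l₂.support (fun β => ∑ i, β i)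
      (Finsupp.support_nonempty_iff.mpr h2)
    have hαI : monomial α (1:K) ∉ I := by
      rw [hl₂, Finsupp.support_filter, Finset.mem_filter] at hαmem
      exact hαmem.2
    set p : Fin n → K := fun i => ((α i : ℕ) : K) with hp
    have hfp : eval p f = 0 := (hmemV f).mp hf α hαI
    have h1p : eval p (l₁.sum F) = 0 := (hmemV _).mp (hsub h1) α hαI
    have h2p : eval p (l₂.sum F) = 0 := by
      rw [hf12, map_add, h1p, zero_add] at hfp
      exact hfp
    have hkey : eval p (l₂.sum F) = l₂ α * eval p (distraction c α) := by
      rw [Finsupp.sum, map_sum, Finset.sum_eq_single α]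
      · exact smul_eval _ _ _
      · intro β hβ hβα
        suffices h : eval p (distraction c β) = 0 by
          show eval p ((l₂ β) • distraction c β) = 0
          rw [smul_eval, h, mul_zero]
        have hβs : (∑ i, α i) ≤ ∑ i, β i := hαmin β hβ
        have hnle : ¬ β ≤ α := by
          intro hle
          obtain ⟨γ, hγ⟩ := le_iff_exists_add.mp hle
          have hsum : ∑ i, α i = (∑ i, β i) + ∑ i, γ i := by
            rw [hγ]
            simp only [Finsupp.add_apply]
            rw [Finset.sum_add_distrib]
          have hγ0 : ∀ i, γ i = 0 := by
            intro i
            have hγsum : ∑ i, γ i = 0 := by omega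
            exact Finset.sum_eq_zero_iff.mp hγsum i (Finset.mem_univ i)
          refine hβα ?_
          rw [hγ]
          ext i
          simp [hγ0 i]
        rw [Finsupp.le_def] at hnle
        push_neg at hnle
        obtain ⟨i, hi⟩ := hnle
        rw [eval_distraction]
        refine Finset.prod_eq_zero (Finset.mem_univ i) ?_
        exact Finset.prod_eq_zero (Finset.mem_range.mpr hi) (by simp [hc, hp])
      · intro h
        exact absurd hαmem h
    rw [h2p] at hkey
    exact (mul_ne_zero (Finsupp.mem_support_iff.mp hαmem) (hdiag α hαI)) hkey.symm
  rw [hf12, h2, Finsupp.sum_zero_index, add_zero]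
  exact h1
end

section
/- Let P be a commutative ring, let m₁,…,m_s be maximal ideals of P, let J = m₁ ∩ ⋯ ∩ m_s, and let I be an ideal of P with J ⊆ I. Then I is a radical ideal, the ideal quotient J : I is a radical ideal, I ∩ (J : I) = J, and I + (J : I) = (1). -/
/-- If `J` is a finite intersection of maximal ideals and `J ⊆ I`, then `I` and `J : I`
are radical, `I ∩ (J : I) = J`, and `I + (J : I) = (1)`. -/
theorem radical_complementary_of_intersection_of_maximals
    {P : Type*} [CommRing P] {s : ℕ} (m : Fin s → Ideal P)
    (hm : ∀ i, (m i).IsMaximal)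
    (J : Ideal P) (hJ : J = ⨅ i, m i)
    (I : Ideal P) (hJI : J ≤ I) :
    I.IsRadical ∧ (J.colon I).IsRadical ∧ I ⊓ J.colon I = J ∧ I + J.colon I = ⊤ := by
  classical
  set S : Finset (Fin s) := Finset.univ.filter (fun i => I ≤ m i) with hS
  set A : Ideal P := ⨅ i ∈ S, m i with hA
  set B : Ideal P := ⨅ i ∈ Sᶜ, m i with hB
  have hmemS : ∀ i, i ∈ S ↔ I ≤ m i := by
    intro i; simp [hS]
  have hmemSc : ∀ i, i ∈ Sᶜ ↔ ¬ I ≤ m i := by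
    intro i; simp [hS]
  have hJAB : J = A ⊓ B := by
    rw [hJ, hA, hB, ← Finset.iInf_union, Finset.union_compl]
    simp
  -- each m i for i ∈ Sᶜ is comaximal with I
  have hsup : ∀ i ∈ Sᶜ, I ⊔ m i = ⊤ := by
    intro i hi
    by_contra h
    exact (hmemSc i).mp hi (le_sup_left.trans
      ((hm i).eq_of_le h le_sup_right).symm.le)
  have hIB : I ⊔ B = ⊤ := Ideal.sup_iInf_eq_top hsup
  -- I = A
  have hIA : I = A := by
    apply le_antisymm
    · exact le_iInf fun i => le_iInf fun hi => (hmemS i).mp hi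
    · intro x hx
      obtain ⟨v, hv, u, hu, huv⟩ := Submodule.mem_sup.mp
        (hIB.symm ▸ Submodule.mem_top : (1 : P) ∈ I ⊔ B)
      have h1 : x * v ∈ I := Ideal.mul_mem_left _ _ hv
      have h2 : x * u ∈ I := by
        apply hJI
        rw [hJAB]
        exact ⟨Ideal.mul_mem_right _ _ hx, Ideal.mul_mem_left _ _ hu⟩
      have : x * v + x * u = x := by rw [← mul_add, huv, mul_one]
      exact this ▸ Ideal.add_mem _ h1 h2
  -- J.colon I = B
  have hcolon : J.colon I = B := by
    apply le_antisymm
    · intro f hf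
      refine Submodule.mem_iInf _ |>.mpr fun i => Submodule.mem_iInf _ |>.mpr fun hi => ?_
      obtain ⟨a, ha, hanot⟩ := SetLike.not_le_iff_exists.mp ((hmemSc i).mp hi)
      have hfa : f * a ∈ m i := by
        have := Submodule.mem_colon.mp hf a ha
        rw [smul_eq_mul] at this
        exact (hJ ▸ iInf_le m i) this
      exact ((hm i).isPrime.mem_or_mem hfa).resolve_right hanot
    · intro f hf
      rw [Submodule.mem_colon]
      intro a ha
      rw [hJ, smul_eq_mul]
      refine Submodule.mem_iInf _ |>.mpr fun i => ?_
      by_cases h : I ≤ m i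
      · exact Ideal.mul_mem_left _ _ (h ha)
      · have hfB : f ∈ m i := by
          have := Submodule.mem_iInf _ |>.mp hf i
          exact Submodule.mem_iInf _ |>.mp this ((hmemSc i).mpr h)
        exact Ideal.mul_mem_right _ _ hfB
  -- A ⊔ B = ⊤
  have hAB : A ⊔ B = ⊤ := by
    apply Ideal.sup_iInf_eq_top
    intro j hj
    apply Ideal.iInf_sup_eq_top
    intro i hi
    have hne : m i ≠ m j := fun h =>
      (hmemSc j).mp hj (h ▸ (hmemS i).mp hi)
    exact (hm i).coprime_of_ne (hm j) hne
  have hradA : A.IsRadical :=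
    Ideal.isRadical_iInf _ fun i => Ideal.isRadical_iInf _ fun _ => (hm i).isPrime.isRadical
  have hradB : B.IsRadical :=
    Ideal.isRadical_iInf _ fun i => Ideal.isRadical_iInf _ fun _ => (hm i).isPrime.isRadical
  refine ⟨hIA ▸ hradA, hcolon ▸ hradB, ?_, ?_⟩
  · rw [hcolon, hIA, hJAB]
  · rw [hcolon, hIA, Ideal.add_eq_sup, hAB]
end

section
/- Let K be a field, let D₁,…,Dₙ be finite nonempty subsets of K, let X = D₁ × ⋯ × Dₙ ⊆ Kⁿ be the corresponding grid of points, and let J = I(X) be its vanishing ideal in P. Then for every ideal I of P with J ⊆ I there exists a subset Y ⊆ X such that I = I(Y), and moreover J : I = I(X ∖ Y). -/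
open MvPolynomial

lemma mem_vanishingIdealOfPoints {n : ℕ} {K : Type*} [Field K]
    {S : Set (Fin n → K)} {f : MvPolynomial (Fin n) K} :
    f ∈ vanishingIdealOfPoints S ↔ ∀ p ∈ S, eval p f = 0 := by
  simp [vanishingIdealOfPoints, Submodule.mem_iInf, RingHom.mem_ker]

/-- Grid Lagrange indicator polynomial at point `p`. -/
noncomputable def gridLag {n : ℕ} {K : Type*} [Field K] [DecidableEq K] (D : Fin n → Finset K)
    (p : Fin n → K) : MvPolynomial (Fin n) K :=
  ∏ i, ∏ c ∈ (D i).erase (p i), C ((p i - c)⁻¹) * (X i - C c)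

lemma eval_gridLag {n : ℕ} {K : Type*} [Field K] [DecidableEq K] (D : Fin n → Finset K)
    (p q : Fin n → K) :
    eval q (gridLag D p) = ∏ i, ∏ c ∈ (D i).erase (p i), (p i - c)⁻¹ * (q i - c) := by
  simp [gridLag]

lemma eval_gridLag_self {n : ℕ} {K : Type*} [Field K] [DecidableEq K] (D : Fin n → Finset K)
    (p : Fin n → K) : eval p (gridLag D p) = 1 := by
  rw [eval_gridLag]
  refine Finset.prod_eq_one fun i _ => Finset.prod_eq_one fun c hc => ?_
  have h : p i - c ≠ 0 := sub_ne_zero.mpr (Ne.symm (Finset.ne_of_mem_erase hc))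
  exact inv_mul_cancel₀ h

lemma eval_gridLag_of_ne {n : ℕ} {K : Type*} [Field K] [DecidableEq K] (D : Fin n → Finset K)
    (p q : Fin n → K) (hq : ∀ i, q i ∈ D i) (hne : q ≠ p) :
    eval q (gridLag D p) = 0 := by
  rw [eval_gridLag]
  obtain ⟨i, hi⟩ := Function.ne_iff.mp hne
  refine Finset.prod_eq_zero (Finset.mem_univ i) ?_
  refine Finset.prod_eq_zero (Finset.mem_erase.mpr ⟨hi, hq i⟩) ?_
  simp

/-- Every ideal containing the vanishing ideal `J` of a grid of points `X` is the
vanishing ideal of a subset `Y ⊆ X`, and `J : I` is the vanishing ideal of `X ∖ Y`. -/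
theorem ideal_above_grid_ideal_is_ideal_of_points
    {n : ℕ} {K : Type*} [Field K]
    (D : Fin n → Finset K) (hD : ∀ i, (D i).Nonempty)
    (X : Set (Fin n → K)) (hX : X = {p | ∀ i, p i ∈ D i})
    (J : Ideal (MvPolynomial (Fin n) K)) (hJ : J = vanishingIdealOfPoints X)
    (I : Ideal (MvPolynomial (Fin n) K)) (hJI : J ≤ I) :
    ∃ Y ⊆ X, I = vanishingIdealOfPoints Y ∧
      J.colon I = vanishingIdealOfPoints (X \ Y) := by
  classical
  have hXmem : ∀ q ∈ X, ∀ i, q i ∈ D i := by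
    intro q hq
    rw [hX] at hq
    exact hq
  have hXfin : X.Finite := by
    apply Set.Finite.subset (Set.Finite.pi (fun i => (D i).finite_toSet))
    intro p hp
    simp only [Set.mem_pi, Set.mem_univ, true_implies, Finset.mem_coe]
    intro i
    exact hXmem p hp i
  set F : Finset (Fin n → K) := hXfin.toFinset with hFdef
  have hmemF : ∀ p, p ∈ F ↔ p ∈ X := fun p => hXfin.mem_toFinset
  set Y : Set (Fin n → K) := {p | p ∈ X ∧ ∀ g ∈ I, eval p g = 0} with hYdef
  have hYX : Y ⊆ X := fun p hp => hp.1
  -- the Lagrange polynomial of a point outside Y lies in I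
  have heI : ∀ p ∈ X, p ∉ Y → gridLag D p ∈ I := by
    intro p hpX hpY
    have hg : ∃ g ∈ I, eval p g ≠ 0 := by
      by_contra h
      push_neg at h
      exact hpY ⟨hpX, h⟩
    obtain ⟨g, hgI, hgp⟩ := hg
    have hJ' : gridLag D p * g - C (eval p g) * gridLag D p ∈ J := by
      rw [hJ, mem_vanishingIdealOfPoints]
      intro q hqX
      simp only [map_sub, map_mul, eval_C]
      by_cases hqp : q = p
      · subst hqp; ring
      · rw [eval_gridLag_of_ne D p q (hXmem q hqX) hqp]; ring
    have h2 : C (eval p g) * gridLag D p ∈ I := by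
      have h3 := I.sub_mem (I.mul_mem_left (gridLag D p) hgI) (hJI hJ')
      simpa using h3
    have h4 := I.mul_mem_left (C (eval p g)⁻¹) h2
    rwa [← mul_assoc, ← C_mul, inv_mul_cancel₀ hgp, C_1, one_mul] at h4
  refine ⟨Y, hYX, ?_, ?_⟩
  · -- I = vanishing ideal of Y
    apply le_antisymm
    · intro f hf
      rw [mem_vanishingIdealOfPoints]
      intro p hp
      exact hp.2 f hf
    · intro f hf
      rw [mem_vanishingIdealOfPoints] at hf
      set s : MvPolynomial (Fin n) K := ∑ p ∈ F, C (eval p f) * gridLag D p with hsdef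
      have hfs : f - s ∈ J := by
        rw [hJ, mem_vanishingIdealOfPoints]
        intro q hqX
        have hqF : q ∈ F := (hmemF q).mpr hqX
        simp only [map_sub, hsdef, map_sum, map_mul, eval_C]
        rw [Finset.sum_eq_single q]
        · rw [eval_gridLag_self]; ring
        · intro p hpF hpq
          rw [eval_gridLag_of_ne D p q (hXmem q hqX) (Ne.symm hpq), mul_zero]
        · intro h; exact absurd hqF h
      have hsI : s ∈ I := by
        apply Ideal.sum_mem
        intro p hpF
        by_cases hpY : p ∈ Y
        · rw [hf p hpY]
          simp
        · exact I.mul_mem_left _ (heI p ((hmemF p).mp hpF) hpY)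
      have : f = (f - s) + s := by ring
      rw [this]
      exact I.add_mem (hJI hfs) hsI
  · -- colon
    ext f
    rw [Submodule.mem_colon, mem_vanishingIdealOfPoints]
    constructor
    · intro h p hp
      obtain ⟨hpX, hpY⟩ := hp
      have hg : ∃ g ∈ I, eval p g ≠ 0 := by
        by_contra hc
        push_neg at hc
        exact hpY ⟨hpX, hc⟩
      obtain ⟨g, hgI, hgp⟩ := hg
      have h1 := h g hgI
      rw [smul_eq_mul, hJ, mem_vanishingIdealOfPoints] at h1
      have h2 := h1 p hpX
      rw [map_mul] at h2
      exact (mul_eq_zero.mp h2).resolve_right hgp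
    · intro h g hgI
      rw [smul_eq_mul, hJ, mem_vanishingIdealOfPoints]
      intro q hqX
      rw [map_mul]
      by_cases hqY : q ∈ Y
      · rw [hqY.2 g hgI, mul_zero]
      · rw [h q ⟨hqX, hqY⟩, zero_mul]
end
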